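/- For every fixed t > 0, the Shu function of order 0 satisfies S_0(x,t) / ( -ln(x) ) → 1 as x → 0⁺. -/

import Mathlib

/-!
With `k x τ = τ⁻¹ e^{-τ - x²/(4τ)}` we have `S₀(x, t) = ½ ∫₀ᵗ k x τ dτ`. On `[0, x²]` the bound
`e^{-s} ≤ 1/s` gives `k x τ ≤ 4/x²`, so that piece of the integral is at most `4`. On `[x², t]`,
`|k x τ - 1/τ| ≤ 1 + x²/(4τ²)`, whose integral is at most `t + 1/4`, while `∫_{x²}^t dτ/τ =
log t - 2 log x`. Hence `S₀(x, t) = -log x + O(1)` as `x → 0⁺`, and `-log x → ∞`.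
-/

open Real MeasureTheory Filter

/-- The Shu function `S_ν(x,t) = (1/2)(x/2)^ν ∫_0^t τ^{-(ν+1)} e^{-τ - x²/(4τ)} dτ`. -/
noncomputable def shu (ν x t : ℝ) : ℝ :=
  (1/2) * (x/2) ^ ν * ∫ τ in (0:ℝ)..t, τ ^ (-(ν+1)) * Real.exp (-τ - x^2 / (4*τ))

open Asymptotics intervalIntegral Topology
open scoped Interval

theorem Asymptotics.tendsto_div_nhds_one_of_isBigO_sub {α β : Type*} [NormedField β]
    {l : Filter α} {u v : α → β} (hv : Tendsto (fun x ↦ ‖v x‖) l atTop)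
    (huv : (u - v) =O[l] (fun _ ↦ (1 : β))) : Tendsto (u / v) l (𝓝 1) :=
  (isEquivalent_iff_tendsto_one <|
      (hv.eventually_ne_atTop 0).mono fun _ ↦ norm_ne_zero_iff.1).1 <|
    huv.trans_isLittleO <| isLittleO_one_left_iff β |>.2 hv

noncomputable def shuKernel (x τ : ℝ) : ℝ := τ⁻¹ * exp (-τ - x ^ 2 / (4 * τ))

lemma shu_zero_eq (x t : ℝ) : shu 0 x t = 2⁻¹ * ∫ τ in (0:ℝ)..t, shuKernel x τ := by
  simp [shu, shuKernel, Real.rpow_neg_one]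

lemma shuKernel_nonneg (x : ℝ) {τ : ℝ} (hτ : 0 ≤ τ) : 0 ≤ shuKernel x τ := by
  unfold shuKernel; positivity

lemma shuKernel_le {x τ : ℝ} (hx : x ≠ 0) (hτ : 0 ≤ τ) : shuKernel x τ ≤ 4 / x ^ 2 := by
  rcases hτ.eq_or_lt with rfl | hτ
  · simp only [shuKernel, inv_zero, zero_mul]; positivity
  have hs : 0 < x ^ 2 / (4 * τ) := by positivity
  calc shuKernel x τ ≤ τ⁻¹ * exp (-(x ^ 2 / (4 * τ))) := by
        unfold shuKernel; gcongr; linarith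
    _ ≤ τ⁻¹ * (x ^ 2 / (4 * τ))⁻¹ := by
        rw [exp_neg]; gcongr; linarith [add_one_le_exp (x ^ 2 / (4 * τ))]
    _ = 4 / x ^ 2 := by field_simp

lemma abs_shuKernel_sub_inv_le (x : ℝ) {τ : ℝ} (hτ : 0 < τ) :
    |shuKernel x τ - τ⁻¹| ≤ 1 + x ^ 2 / (4 * τ ^ 2) := by
  set s := τ + x ^ 2 / (4 * τ)
  have hs : 0 ≤ s := by positivity
  have hexp : |exp (-s) - 1| ≤ s := by
    rw [abs_sub_comm, abs_of_nonneg (by simpa using hs)]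
    linarith [one_sub_le_exp_neg s]
  calc |shuKernel x τ - τ⁻¹| = τ⁻¹ * |exp (-s) - 1| := by
        rw [shuKernel, show -τ - x ^ 2 / (4 * τ) = -s by ring, ← mul_sub_one, abs_mul,
          abs_of_pos (inv_pos.2 hτ)]
    _ ≤ τ⁻¹ * s := by gcongr
    _ = 1 + x ^ 2 / (4 * τ ^ 2) := by simp only [s]; field_simp

lemma intervalIntegrable_shuKernel {x a b : ℝ} (hx : x ≠ 0) (ha : 0 ≤ a) (hb : 0 ≤ b) :
    IntervalIntegrable (shuKernel x) volume a b := by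
  refine (intervalIntegrable_const (c := 4 / x ^ 2)).mono_fun'
    (by unfold shuKernel; fun_prop) ((ae_restrict_mem measurableSet_uIoc).mono fun τ hτab ↦ ?_)
  have hτ : 0 ≤ τ := le_trans (le_min ha hb) (Set.uIoc_subset_uIcc hτab).1
  exact (norm_of_nonneg (shuKernel_nonneg x hτ)).trans_le (shuKernel_le hx hτ)

lemma abs_integral_shuKernel_zero_sq_le {x : ℝ} (hx : x ≠ 0) :
    |∫ τ in (0:ℝ)..x ^ 2, shuKernel x τ| ≤ 4 := by
  have hbound : ∀ τ ∈ Ι 0 (x ^ 2), ‖shuKernel x τ‖ ≤ 4 / x ^ 2 := fun τ hτ ↦ by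
    have hτ : 0 ≤ τ := (Set.uIoc_of_le (sq_nonneg x) ▸ hτ).1.le
    exact (norm_of_nonneg (shuKernel_nonneg x hτ)).trans_le (shuKernel_le hx hτ)
  calc |∫ τ in (0:ℝ)..x ^ 2, shuKernel x τ| ≤ 4 / x ^ 2 * |x ^ 2 - 0| :=
        norm_integral_le_of_norm_le_const hbound
    _ = 4 := by rw [sub_zero, abs_of_pos (by positivity)]; field_simp

lemma abs_integral_shuKernel_sub_inv_le {x t : ℝ} (hx : x ≠ 0) (hxt : x ^ 2 ≤ t) :
    |∫ τ in x ^ 2..t, (shuKernel x τ - τ⁻¹)| ≤ t + 1 / 4 := by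
  have hx2 : 0 < x ^ 2 := by positivity
  have hpos : ∀ τ ∈ Set.uIcc (x ^ 2) t, 0 < τ := fun τ hτ ↦
    hx2.trans_le (Set.uIcc_of_le hxt ▸ hτ).1
  have hderiv : ∀ τ ∈ Set.uIcc (x ^ 2) t,
      HasDerivAt (fun τ ↦ τ - x ^ 2 / 4 * τ⁻¹) (1 + x ^ 2 / (4 * τ ^ 2)) τ := fun τ hτ ↦
    ((hasDerivAt_id' τ).sub ((hasDerivAt_inv (hpos τ hτ).ne').const_mul (x ^ 2 / 4))).congr_deriv
      (by ring)
  have hint : IntervalIntegrable (fun τ ↦ 1 + x ^ 2 / (4 * τ ^ 2)) volume (x ^ 2) t :=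
    ContinuousOn.intervalIntegrable fun τ hτ ↦ by
      have := (hpos τ hτ).ne'
      fun_prop (disch := positivity)
  calc |∫ τ in x ^ 2..t, (shuKernel x τ - τ⁻¹)|
      ≤ ∫ τ in x ^ 2..t, (1 + x ^ 2 / (4 * τ ^ 2)) :=
        norm_integral_le_of_norm_le (f := fun τ ↦ shuKernel x τ - τ⁻¹) hxt
          (ae_of_all _ fun τ hτ ↦ abs_shuKernel_sub_inv_le x (hx2.trans hτ.1)) hint
    _ = (t - x ^ 2 / 4 * t⁻¹) - (x ^ 2 - x ^ 2 / 4 * (x ^ 2)⁻¹) :=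
        integral_eq_sub_of_hasDerivAt hderiv hint
    _ ≤ t + 1 / 4 := by
        have : 0 ≤ x ^ 2 / 4 * t⁻¹ := by have := hx2.trans_le hxt; positivity
        have : x ^ 2 / 4 * (x ^ 2)⁻¹ = 1 / 4 := by field_simp
        linarith

lemma abs_integral_shuKernel_sub_log_le {x t : ℝ} (hx : x ≠ 0) (hxt : x ^ 2 ≤ t) :
    |(∫ τ in (0:ℝ)..t, shuKernel x τ) - (log t - 2 * log x)| ≤ t + 17 / 4 := by
  have hx2 : 0 < x ^ 2 := by positivity
  have hinv : IntervalIntegrable (fun τ : ℝ ↦ τ⁻¹) volume (x ^ 2) t :=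
    intervalIntegrable_inv (fun τ hτ ↦ (hx2.trans_le (Set.uIcc_of_le hxt ▸ hτ).1).ne')
      continuousOn_id
  have hsplit : (∫ τ in (0:ℝ)..t, shuKernel x τ) - (log t - 2 * log x) =
      (∫ τ in (0:ℝ)..x ^ 2, shuKernel x τ) + ∫ τ in x ^ 2..t, (shuKernel x τ - τ⁻¹) := by
    rw [integral_sub (intervalIntegrable_shuKernel hx hx2.le (hx2.le.trans hxt)) hinv,
      integral_inv_of_pos hx2 (hx2.trans_le hxt), log_div (hx2.trans_le hxt).ne' hx2.ne',
      log_pow, ← integral_add_adjacent_intervals (intervalIntegrable_shuKernel hx le_rfl hx2.le)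
        (intervalIntegrable_shuKernel hx hx2.le (hx2.le.trans hxt))]
    push_cast; ring
  rw [hsplit]
  linarith [abs_add_le (∫ τ in (0:ℝ)..x ^ 2, shuKernel x τ)
    (∫ τ in x ^ 2..t, (shuKernel x τ - τ⁻¹)),
    abs_integral_shuKernel_zero_sq_le hx, abs_integral_shuKernel_sub_inv_le hx hxt]

theorem stmt_18 (t : ℝ) (ht : 0 < t) :
    Tendsto (fun x : ℝ => shu 0 x t / (-Real.log x))
      (nhdsWithin 0 (Set.Ioi 0)) (nhds 1) := by
  have hsmall : ∀ᶠ x in 𝓝[>] (0:ℝ), x ≠ 0 ∧ x ^ 2 ≤ t := by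
    have hsq : Tendsto (fun x : ℝ ↦ x ^ 2) (𝓝[>] 0) (𝓝 0) := by
      simpa using ((continuous_pow 2).tendsto (0:ℝ)).mono_left nhdsWithin_le_nhds
    filter_upwards [self_mem_nhdsWithin, hsq.eventually_le_const ht] with x hx hxt
    exact ⟨hx.ne', hxt⟩
  refine tendsto_div_nhds_one_of_isBigO_sub
    (tendsto_norm_atTop_atTop.comp (tendsto_neg_atBot_atTop.comp tendsto_log_nhdsGT_zero)) ?_
  refine IsBigO.of_bound ((t + 17 / 4 + |log t|) / 2) (hsmall.mono fun x ⟨hx, hxt⟩ ↦ ?_)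
  have h := abs_integral_shuKernel_sub_log_le hx hxt
  rw [Pi.sub_apply, shu_zero_eq, norm_one, mul_one, Real.norm_eq_abs]
  set I := ∫ τ in (0:ℝ)..t, shuKernel x τ
  calc |2⁻¹ * I - -log x| = |2⁻¹ * ((I - (log t - 2 * log x)) + log t)| := by congr 1; ring
    _ = 2⁻¹ * |(I - (log t - 2 * log x)) + log t| := by rw [abs_mul, abs_of_pos (by norm_num)]
    _ ≤ (t + 17 / 4 + |log t|) / 2 := by
        linarith [abs_add_le (I - (log t - 2 * log x)) (log t)]
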